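/- arXiv:1812.11550 — 3 statements merged into one kernel-verified Lean document; each statement's English description precedes it below -/
import Mathlib

section
/- Let A be a unital ring, τ : A → C a linear functional with the trace property τ(xy) = τ(yx) for all x, y ∈ A, and let a, r, r' ∈ A be such that both r and r' are almost-inverses of a in the sense that 1 - ar, 1 - ra, 1 - ar', 1 - r'a all lie in a two-sided ideal I on which τ is defined. Then τ(1 - ra) - τ(1 - ar) = τ(1 - r'a) - τ(1 - ar'), i.e., the localized index τ([a, r]) does not depend on the choice of almost-inverse r. -/
/-!
Replacing `r` by `r'` changes `τ(1 - ra)` by `τ((r' - r)a)` and `τ(1 - ar)` by `τ(a(r' - r))`.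
Both products lie in `I`, as differences of two elements `1 - _` of `I`, so the trace property
makes the two changes equal.
-/

theorem TwoSidedIdeal.sub_mem_of_one_sub_mem {A : Type*} [Ring A] (I : TwoSidedIdeal A)
    {x y : A} (hx : 1 - x ∈ I) (hy : 1 - y ∈ I) : y - x ∈ I := by
  simpa only [sub_sub_sub_cancel_left] using I.sub_mem hx hy

theorem AddMonoidHom.index_sub_index {A C : Type*} [Ring A] [AddCommGroup C] (τ : A →+ C)
    (a r r' : A) :
    τ (1 - r * a) - τ (1 - a * r) - (τ (1 - r' * a) - τ (1 - a * r')) =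
      τ ((r' - r) * a) - τ (a * (r' - r)) := by
  have hleft : (1 - r * a) - (1 - r' * a) = (r' - r) * a := by noncomm_ring
  have hright : (1 - a * r) - (1 - a * r') = a * (r' - r) := by noncomm_ring
  rw [sub_sub_sub_comm, ← map_sub, ← map_sub, hleft, hright]

/-- The localized index `τ(1 - ra) - τ(1 - ar)` does not depend on the choice of
the almost-inverse `r` of `a` modulo a two-sided ideal `I`, for a trace `τ`. -/
theorem index_independent_of_parametrix {A C : Type*} [Ring A] [AddCommGroup C]
    (I : TwoSidedIdeal A) (τ : A →+ C)
    (htr : ∀ x y : A, x * y ∈ I → y * x ∈ I → τ (x * y) = τ (y * x))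
    (a r r' : A)
    (h1 : 1 - a * r ∈ I) (h2 : 1 - r * a ∈ I)
    (h3 : 1 - a * r' ∈ I) (h4 : 1 - r' * a ∈ I) :
    τ (1 - r * a) - τ (1 - a * r) = τ (1 - r' * a) - τ (1 - a * r') := by
  have hleft : a * (r' - r) ∈ I := by
    simpa only [mul_sub] using I.sub_mem_of_one_sub_mem h1 h3
  have hright : (r' - r) * a ∈ I := by
    simpa only [sub_mul] using I.sub_mem_of_one_sub_mem h2 h4
  rw [← sub_eq_zero, τ.index_sub_index, htr a (r' - r) hleft hright, sub_self]
end

section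
/- Let A be a unital ring, a, r ∈ A with 1 - a·r and 1 - r·a in a two-sided ideal I, and τ a trace on I (τ(xy) = τ(yx) for x ∈ A, y ∈ I with xy, yx ∈ I). Define W = [[(2-ar)a, 1-ar],[ra-1, r]] in M₂(A) and P₀ = [[1,0],[0,0]]. Then the matrix trace extension of τ satisfies τ(W P₀ W⁻¹ - P₀) = τ(1 - ra) - τ(1 - ar). -/
/-!
Only the diagonal of `W P₀ W⁻¹ - P₀` matters, and with `y = a (1 - r a) ∈ I` it is
`y r - (1 - a r)` and `(1 - r a) - r y`. The trace property `τ (r y) = τ (y r)` cancels the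
two `y`-terms, leaving `τ (1 - r a) - τ (1 - a r)`.
-/

section ConjugatedProjection

variable {A : Type*} [Ring A] (a r : A)

theorem conj_projection_sub_apply_zero_zero :
    (!![(2 - a * r) * a, 1 - a * r; r * a - 1, r] * !![1, 0; 0, 0] *
        !![r, r * a - 1; 1 - a * r, a * (2 - r * a)] - !![1, 0; 0, 0] :
      Matrix (Fin 2) (Fin 2) A) 0 0
      = a * (1 - r * a) * r - (1 - a * r) := by
  simp only [Matrix.mul_apply, Fin.sum_univ_two, Matrix.sub_apply, Matrix.of_apply,
    Matrix.cons_val', Matrix.cons_val_zero, Matrix.cons_val_one, Matrix.empty_val',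
    Matrix.cons_val_fin_one]
  noncomm_ring

theorem conj_projection_sub_apply_one_one :
    (!![(2 - a * r) * a, 1 - a * r; r * a - 1, r] * !![1, 0; 0, 0] *
        !![r, r * a - 1; 1 - a * r, a * (2 - r * a)] - !![1, 0; 0, 0] :
      Matrix (Fin 2) (Fin 2) A) 1 1
      = (1 - r * a) - r * (a * (1 - r * a)) := by
  simp only [Matrix.mul_apply, Fin.sum_univ_two, Matrix.sub_apply, Matrix.of_apply,
    Matrix.cons_val', Matrix.cons_val_zero, Matrix.cons_val_one, Matrix.empty_val',
    Matrix.cons_val_fin_one]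
  noncomm_ring

end ConjugatedProjection

theorem index_via_projections_general {A C : Type*} [Ring A] [AddCommGroup C]
    (I : TwoSidedIdeal A) (τ : A →+ C)
    (htr : ∀ x y : A, y ∈ I → τ (x * y) = τ (y * x))
    (a r : A) (h2 : 1 - r * a ∈ I) :
    let W : Matrix (Fin 2) (Fin 2) A :=
      !![(2 - a * r) * a, 1 - a * r; r * a - 1, r]
    let Winv : Matrix (Fin 2) (Fin 2) A :=
      !![r, r * a - 1; 1 - a * r, a * (2 - r * a)]
    let P0 : Matrix (Fin 2) (Fin 2) A := !![1, 0; 0, 0]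
    τ ((W * P0 * Winv - P0) 0 0) + τ ((W * P0 * Winv - P0) 1 1)
      = τ (1 - r * a) - τ (1 - a * r) := by
  intro W Winv P0
  have hcomm : τ (r * (a * (1 - r * a))) = τ (a * (1 - r * a) * r) :=
    htr r _ (I.mul_mem_left a _ h2)
  rw [conj_projection_sub_apply_zero_zero, conj_projection_sub_apply_one_one,
    map_sub τ _ (1 - a * r), map_sub τ (1 - r * a), hcomm]
  abel

/-- The matrix-trace extension of a trace `τ` on an ideal `I` satisfies
`τ(W P₀ W⁻¹ - P₀) = τ(1 - ra) - τ(1 - ar)` for the explicit invertible `W`. -/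
theorem index_via_projections {A C : Type*} [Ring A] [AddCommGroup C]
    (I : TwoSidedIdeal A) (τ : A →+ C)
    (htr : ∀ x y : A, y ∈ I → τ (x * y) = τ (y * x))
    (a r : A) (h1 : 1 - a * r ∈ I) (h2 : 1 - r * a ∈ I) :
    let W : Matrix (Fin 2) (Fin 2) A :=
      !![(2 - a * r) * a, 1 - a * r; r * a - 1, r]
    let Winv : Matrix (Fin 2) (Fin 2) A :=
      !![r, r * a - 1; 1 - a * r, a * (2 - r * a)]
    let P0 : Matrix (Fin 2) (Fin 2) A := !![1, 0; 0, 0]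
    τ ((W * P0 * Winv - P0) 0 0) + τ ((W * P0 * Winv - P0) 1 1)
      = τ (1 - r * a) - τ (1 - a * r) :=
  index_via_projections_general I τ htr a r h2
end

section
/- Let A be a unital ring with a two-sided ideal I and τ : I → C a trace (τ(xy) = τ(yx) whenever x ∈ A, y ∈ I). Define for any a ∈ A with almost-inverse r (1 − ar, 1 − ra ∈ I) the index ind(a) = τ(1 − ra) − τ(1 − ar). If a, b ∈ A are both invertible modulo I, then ind(ab) = ind(a) + ind(b). -/
/-!
If `r` is an almost-inverse of `a` on one side and `r'` on the other, then `r' - r = r' u - v r`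
with `u = 1 - a r` and `v = 1 - r' a` in `I`, so the trace property gives `τ ((r' - r) a) = τ (a (r' - r))`:
the index does not depend on the almost-inverse. It therefore suffices to compute the index of `a b`
with the almost-inverse `rb ra`, where `1 - rb ra a b = (1 - rb b) + rb (1 - ra a) b` and
`1 - a b rb ra = (1 - a ra) + a (1 - b rb) ra`; moving the outer factors around by the trace property,
the two cross terms both become `τ ((1 - ra a) (1 - b rb))` and cancel.
-/

namespace TwoSidedIdeal

variable {A C : Type*} [Ring A] [AddCommGroup C]

def IsTrace (I : TwoSidedIdeal A) (τ : A →+ C) : Prop :=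
  ∀ x y : A, y ∈ I → τ (x * y) = τ (y * x)

def index (τ : A →+ C) (a r : A) : C :=
  τ (1 - r * a) - τ (1 - a * r)

variable {I : TwoSidedIdeal A} {τ : A →+ C}

theorem IsTrace.map_mul_mul_comm (hτ : IsTrace I τ) {u : A} (hu : u ∈ I) (x y : A) :
    τ (x * u * y) = τ (u * y * x) := by
  rw [mul_assoc]
  exact hτ x (u * y) (I.mul_mem_right _ _ hu)

theorem index_eq_of_mem (hτ : IsTrace I τ) {a r r' : A}
    (hr : 1 - a * r ∈ I) (hr' : 1 - r' * a ∈ I) : index τ a r = index τ a r' := by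
  have hdiff : r' - r = r' * (1 - a * r) - (1 - r' * a) * r := by noncomm_ring
  have hcomm : τ ((r' - r) * a) = τ (a * (r' - r)) :=
    calc τ ((r' - r) * a)
      _ = τ (r' * (1 - a * r) * a) - τ ((1 - r' * a) * r * a) := by rw [hdiff, sub_mul, map_sub]
      _ = τ (a * r' * (1 - a * r)) - τ (a * (1 - r' * a) * r) := by
        rw [hτ.map_mul_mul_comm hr, hτ.map_mul_mul_comm hr' a, hτ (a * r') _ hr, mul_assoc]
      _ = τ (a * (r' - r)) := by rw [← map_sub, hdiff]; congr 1; noncomm_ring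
  rw [index, index, sub_eq_sub_iff_sub_eq_sub, ← map_sub, ← map_sub]
  convert hcomm using 2 <;> noncomm_ring

theorem one_sub_mul_mul_mem {a b ra rb : A}
    (ha : 1 - ra * a ∈ I) (hb : 1 - rb * b ∈ I) : 1 - rb * ra * (a * b) ∈ I := by
  have hdecomp : 1 - rb * ra * (a * b) = (1 - rb * b) + rb * (1 - ra * a) * b := by noncomm_ring
  rw [hdecomp]
  exact I.add_mem hb (I.mul_mem_right _ _ (I.mul_mem_left _ _ ha))

theorem index_mul_mul (hτ : IsTrace I τ) {a b ra rb : A}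
    (ha : 1 - ra * a ∈ I) (hb : 1 - b * rb ∈ I) :
    index τ (a * b) (rb * ra) = index τ a ra + index τ b rb := by
  have hleft : 1 - rb * ra * (a * b) = (1 - rb * b) + rb * (1 - ra * a) * b := by noncomm_ring
  have hright : 1 - a * b * (rb * ra) = (1 - a * ra) + a * (1 - b * rb) * ra := by noncomm_ring
  have hcross_a : τ (rb * (1 - ra * a) * b) = τ (1 - ra * a) - τ ((1 - ra * a) * (1 - b * rb)) := by
    rw [hτ.map_mul_mul_comm ha, ← map_sub]
    congr 1
    noncomm_ring
  have hcross_b : τ (a * (1 - b * rb) * ra) = τ (1 - b * rb) - τ ((1 - b * rb) * (1 - ra * a)) := by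
    rw [hτ.map_mul_mul_comm hb, ← map_sub]
    congr 1
    noncomm_ring
  rw [index, index, index, hleft, hright, map_add, map_add, hcross_a, hcross_b, hτ _ _ hb]
  abel

end TwoSidedIdeal

open TwoSidedIdeal in
theorem index_additive_general {A C : Type*} [Ring A] [AddCommGroup C]
    (I : TwoSidedIdeal A) (τ : A →+ C)
    (htr : ∀ x y : A, y ∈ I → τ (x * y) = τ (y * x))
    (a b ra rb rab : A)
    (ha2 : 1 - ra * a ∈ I)
    (hb1 : 1 - b * rb ∈ I) (hb2 : 1 - rb * b ∈ I)
    (hab1 : 1 - (a * b) * rab ∈ I) :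
    τ (1 - rab * (a * b)) - τ (1 - (a * b) * rab)
      = (τ (1 - ra * a) - τ (1 - a * ra)) + (τ (1 - rb * b) - τ (1 - b * rb)) :=
  calc index τ (a * b) rab
    _ = index τ (a * b) (rb * ra) := index_eq_of_mem htr hab1 (one_sub_mul_mul_mem ha2 hb2)
    _ = index τ a ra + index τ b rb := index_mul_mul htr ha2 hb1

/-- Additivity of the localized index: for `a`, `b` invertible modulo a
two-sided ideal `I` with almost-inverses `ra`, `rb`, and any almost-inverse
`rab` of `a*b`, one has `ind(ab) = ind(a) + ind(b)`. -/
theorem index_additive {A C : Type*} [Ring A] [AddCommGroup C]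
    (I : TwoSidedIdeal A) (τ : A →+ C)
    (htr : ∀ x y : A, y ∈ I → τ (x * y) = τ (y * x))
    (a b ra rb rab : A)
    (ha1 : 1 - a * ra ∈ I) (ha2 : 1 - ra * a ∈ I)
    (hb1 : 1 - b * rb ∈ I) (hb2 : 1 - rb * b ∈ I)
    (hab1 : 1 - (a * b) * rab ∈ I) (hab2 : 1 - rab * (a * b) ∈ I) :
    τ (1 - rab * (a * b)) - τ (1 - (a * b) * rab)
      = (τ (1 - ra * a) - τ (1 - a * ra)) + (τ (1 - rb * b) - τ (1 - b * rb)) :=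
  index_additive_general I τ htr a b ra rb rab ha2 hb1 hb2 hab1
end
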